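/- arXiv:2206.06074 — 2 statements merged into one kernel-verified Lean document; each statement's English description precedes it below -/
import Mathlib

section
/- By the Cayley–Hamilton theorem, a state x belongs to the weakly unobservable subspace (i.e., there exists for every k ≥ 0 an input sequence producing zero output up to time k from x) if and only if there exists an input sequence U(n-1) of length n such that the output sequence up to time n-1 from x is zero, where n is the state dimension. -/
open Matrix

/-- State trajectory of the LTI system x(k+1) = A x(k) + B u(k). -/
noncomputable def traj {n p : ℕ} (A : Matrix (Fin n) (Fin n) ℝ) (B : Matrix (Fin n) (Fin p) ℝ)
    (u : ℕ → Fin p → ℝ) (x0 : Fin n → ℝ) : ℕ → Fin n → ℝ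
  | 0 => x0
  | k + 1 => A.mulVec (traj A B u x0 k) + B.mulVec (u k)

/-- Output y(k) = C x(k) + D u(k). -/
noncomputable def outSeq {n p m : ℕ} (A : Matrix (Fin n) (Fin n) ℝ) (B : Matrix (Fin n) (Fin p) ℝ)
    (C : Matrix (Fin m) (Fin n) ℝ) (D : Matrix (Fin m) (Fin p) ℝ)
    (u : ℕ → Fin p → ℝ) (x0 : Fin n → ℝ) (k : ℕ) : Fin m → ℝ :=
  C.mulVec (traj A B u x0 k) + D.mulVec (u k)

/-- Weakly unobservable subspace: states from which some input sequence keeps the output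
identically zero. -/
noncomputable def wus {n p m : ℕ} (A : Matrix (Fin n) (Fin n) ℝ) (B : Matrix (Fin n) (Fin p) ℝ)
    (C : Matrix (Fin m) (Fin n) ℝ) (D : Matrix (Fin m) (Fin p) ℝ) : Set (Fin n → ℝ) :=
  {x | ∃ u : ℕ → Fin p → ℝ, ∀ k : ℕ, outSeq A B C D u x k = 0}

/-- Opacity of the secret initial state `xs` with respect to the non-secret initial state `xns`:
for every input sequence applied from `xs` there is an input sequence from `xns` producing the
same output sequence. -/
noncomputable def isOpaque {n p m : ℕ} (A : Matrix (Fin n) (Fin n) ℝ) (B : Matrix (Fin n) (Fin p) ℝ)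
    (C : Matrix (Fin m) (Fin n) ℝ) (D : Matrix (Fin m) (Fin p) ℝ)
    (xs xns : Fin n → ℝ) : Prop :=
  ∀ us : ℕ → Fin p → ℝ, ∃ uns : ℕ → Fin p → ℝ,
    ∀ k : ℕ, outSeq A B C D us xs k = outSeq A B C D uns xns k

section Aux

variable {n p m : ℕ} (A : Matrix (Fin n) (Fin n) ℝ) (B : Matrix (Fin n) (Fin p) ℝ)
    (C : Matrix (Fin m) (Fin n) ℝ) (D : Matrix (Fin m) (Fin p) ℝ)

lemma traj_add' (u v : ℕ → Fin p → ℝ) (x y : Fin n → ℝ) (k : ℕ) :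
    traj A B (u + v) (x + y) k = traj A B u x k + traj A B v y k := by
  induction k with
  | zero => rfl
  | succ k ih =>
    simp only [traj, ih, Pi.add_apply, mulVec_add]
    abel

lemma traj_smul' (c : ℝ) (u : ℕ → Fin p → ℝ) (x : Fin n → ℝ) (k : ℕ) :
    traj A B (c • u) (c • x) k = c • traj A B u x k := by
  induction k with
  | zero => rfl
  | succ k ih =>
    simp only [traj, ih, Pi.smul_apply, mulVec_smul, smul_add]

lemma traj_zero' (k : ℕ) : traj A B (0 : ℕ → Fin p → ℝ) (0 : Fin n → ℝ) k = 0 := by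
  induction k with
  | zero => rfl
  | succ k ih => simp [traj, ih]

lemma traj_shift' (u : ℕ → Fin p → ℝ) (x : Fin n → ℝ) (k : ℕ) :
    traj A B u x (k + 1)
      = traj A B (fun i => u (i + 1)) (A.mulVec x + B.mulVec (u 0)) k := by
  induction k with
  | zero => rfl
  | succ k ih =>
    have h : traj A B u x (k + 1 + 1)
        = A.mulVec (traj A B u x (k + 1)) + B.mulVec (u (k + 1)) := rfl
    rw [h, ih]; rfl

lemma outSeq_add' (u v : ℕ → Fin p → ℝ) (x y : Fin n → ℝ) (k : ℕ) :
    outSeq A B C D (u + v) (x + y) k = outSeq A B C D u x k + outSeq A B C D v y k := by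
  simp only [outSeq, traj_add', Pi.add_apply, mulVec_add]
  abel

lemma outSeq_smul' (c : ℝ) (u : ℕ → Fin p → ℝ) (x : Fin n → ℝ) (k : ℕ) :
    outSeq A B C D (c • u) (c • x) k = c • outSeq A B C D u x k := by
  simp only [outSeq, traj_smul', Pi.smul_apply, mulVec_smul, smul_add]

lemma outSeq_zero' (k : ℕ) :
    outSeq A B C D (0 : ℕ → Fin p → ℝ) (0 : Fin n → ℝ) k = 0 := by
  simp [outSeq, traj_zero']

lemma outSeq_shift' (u : ℕ → Fin p → ℝ) (x : Fin n → ℝ) (k : ℕ) :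
    outSeq A B C D u x (k + 1)
      = outSeq A B C D (fun i => u (i + 1)) (A.mulVec x + B.mulVec (u 0)) k := by
  simp only [outSeq, traj_shift']

/-- The subspace of states from which some input keeps the first `j` outputs zero. -/
noncomputable def Vsub (j : ℕ) : Submodule ℝ (Fin n → ℝ) where
  carrier := {x | ∃ u : ℕ → Fin p → ℝ, ∀ i < j, outSeq A B C D u x i = 0}
  add_mem' := by
    rintro a b ⟨u, hu⟩ ⟨v, hv⟩
    exact ⟨u + v, fun i hi => by rw [outSeq_add', hu i hi, hv i hi, add_zero]⟩
  zero_mem' := ⟨0, fun i _ => outSeq_zero' A B C D i⟩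
  smul_mem' := by
    rintro c a ⟨u, hu⟩
    exact ⟨c • u, fun i hi => by rw [outSeq_smul', hu i hi, smul_zero]⟩

lemma Vsub_anti : Antitone (Vsub A B C D) := by
  intro j j' h x hx
  obtain ⟨u, hu⟩ := hx
  exact ⟨u, fun i hi => hu i (lt_of_lt_of_le hi h)⟩

lemma mem_Vsub_succ (j : ℕ) (x : Fin n → ℝ) :
    x ∈ Vsub A B C D (j + 1) ↔
      ∃ u0 : Fin p → ℝ, C.mulVec x + D.mulVec u0 = 0 ∧
        A.mulVec x + B.mulVec u0 ∈ Vsub A B C D j := by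
  constructor
  · rintro ⟨u, hu⟩
    refine ⟨u 0, hu 0 (Nat.succ_pos j), ⟨fun i => u (i + 1), fun i hi => ?_⟩⟩
    rw [← outSeq_shift']
    exact hu (i + 1) (Nat.succ_lt_succ hi)
  · rintro ⟨u0, h0, u', hu'⟩
    refine ⟨fun k => Nat.casesOn k u0 u', fun i hi => ?_⟩
    cases i with
    | zero => exact h0
    | succ i =>
      rw [outSeq_shift']
      exact hu' i (Nat.lt_of_succ_lt_succ hi)

lemma Vsub_stab_step (j : ℕ) (h : Vsub A B C D j = Vsub A B C D (j + 1)) :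
    Vsub A B C D (j + 1) = Vsub A B C D (j + 2) := by
  refine le_antisymm (fun x hx => ?_) (Vsub_anti A B C D (by omega))
  obtain ⟨u0, h0, h1⟩ := (mem_Vsub_succ A B C D j x).1 hx
  exact (mem_Vsub_succ A B C D (j + 1) x).2 ⟨u0, h0, h ▸ h1⟩

lemma Vsub_stab (j : ℕ) (h : Vsub A B C D j = Vsub A B C D (j + 1)) :
    ∀ d, Vsub A B C D (j + d) = Vsub A B C D j := by
  have key : ∀ d, Vsub A B C D (j + d) = Vsub A B C D (j + d + 1) := by
    intro d
    induction d with
    | zero => exact h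
    | succ d ih => exact Vsub_stab_step A B C D (j + d) ih
  intro d
  induction d with
  | zero => rfl
  | succ d ih => exact (key d).symm.trans ih

lemma Vsub_exists_stab : ∃ j ≤ n, Vsub A B C D j = Vsub A B C D (j + 1) := by
  by_contra hc
  push_neg at hc
  have hstrict : ∀ j ≤ n, Vsub A B C D (j + 1) < Vsub A B C D j := fun j hj =>
    lt_of_le_of_ne (Vsub_anti A B C D (Nat.le_succ j)) (fun he => hc j hj he.symm)
  have hrank : ∀ j ≤ n, Module.finrank ℝ (Vsub A B C D (j + 1)) <
      Module.finrank ℝ (Vsub A B C D j) := fun j hj =>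
    Submodule.finrank_lt_finrank_of_lt (hstrict j hj)
  have hsum : ∀ j ≤ n + 1, Module.finrank ℝ (Vsub A B C D j) + j ≤
      Module.finrank ℝ (Vsub A B C D 0) := by
    intro j hj
    induction j with
    | zero => simp
    | succ j ih =>
      have h1 := hrank j (by omega)
      have h2 := ih (by omega)
      omega
  have h1 := hsum (n + 1) le_rfl
  have h2 : Module.finrank ℝ (Vsub A B C D 0) ≤ n := by
    have := Submodule.finrank_le (Vsub A B C D 0 : Submodule ℝ (Fin n → ℝ))
    simpa using this
  omega

end Aux

/-- By Cayley–Hamilton: x belongs to the WUS (for every k there is an input sequence giving zero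
output up to time k) iff there is an input sequence giving zero output up to time n-1. -/
theorem wus_iff_zero_output_up_to_n_minus_one {n p m : ℕ}
    (A : Matrix (Fin n) (Fin n) ℝ) (B : Matrix (Fin n) (Fin p) ℝ)
    (C : Matrix (Fin m) (Fin n) ℝ) (D : Matrix (Fin m) (Fin p) ℝ) (x : Fin n → ℝ) :
    (∀ k : ℕ, ∃ u : ℕ → Fin p → ℝ, ∀ j ≤ k, outSeq A B C D u x j = 0) ↔
      (∃ u : ℕ → Fin p → ℝ, ∀ j < n, outSeq A B C D u x j = 0) := by
  constructor
  · intro h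
    obtain ⟨u, hu⟩ := h n
    exact ⟨u, fun j hj => hu j hj.le⟩
  · rintro ⟨u, hu⟩ k
    have hx : x ∈ Vsub A B C D n := ⟨u, hu⟩
    obtain ⟨j, hjn, hj⟩ := Vsub_exists_stab A B C D
    have hstab := Vsub_stab A B C D j hj
    have hxk : x ∈ Vsub A B C D (k + 1) := by
      rcases le_or_gt (k + 1) n with h' | h'
      · exact Vsub_anti A B C D h' hx
      · have h1 : Vsub A B C D (k + 1) = Vsub A B C D j := by
          have := hstab (k + 1 - j)
          rwa [Nat.add_sub_cancel' (by omega)] at this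
        have h2 : Vsub A B C D n = Vsub A B C D j := by
          have := hstab (n - j)
          rwa [Nat.add_sub_cancel' hjn] at this
        rw [h1, ← h2]; exact hx
    obtain ⟨u', hu'⟩ := hxk
    exact ⟨u', fun i hi => hu' i (by omega)⟩
end

section
/- A secret initial state x_s(0) is opaque with respect to a singleton non-secret set {x_ns(0)} if and only if x_s(0) − x_ns(0) belongs to the weakly unobservable subspace V(Γ). (Opacity here means: for all k ≥ 0 and for every input sequence U_s(k), there exists an input sequence U_ns(k) such that Y_{x_s(0),U_s(k)} = Y_{x_ns(0),U_ns(k)}.) -/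
open Matrix

lemma traj_sub {n p : ℕ} (A : Matrix (Fin n) (Fin n) ℝ) (B : Matrix (Fin n) (Fin p) ℝ)
    (u v : ℕ → Fin p → ℝ) (x y : Fin n → ℝ) (k : ℕ) :
    traj A B (u - v) (x - y) k = traj A B u x k - traj A B v y k := by
  induction k with
  | zero => rfl
  | succ k ih =>
    simp only [traj, ih, Pi.sub_apply, Matrix.mulVec_sub]
    abel

lemma outSeq_sub {n p m : ℕ} (A : Matrix (Fin n) (Fin n) ℝ) (B : Matrix (Fin n) (Fin p) ℝ)
    (C : Matrix (Fin m) (Fin n) ℝ) (D : Matrix (Fin m) (Fin p) ℝ)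
    (u v : ℕ → Fin p → ℝ) (x y : Fin n → ℝ) (k : ℕ) :
    outSeq A B C D (u - v) (x - y) k = outSeq A B C D u x k - outSeq A B C D v y k := by
  simp only [outSeq, traj_sub, Pi.sub_apply, Matrix.mulVec_sub]
  abel

/-- xs is opaque with respect to {xns} iff xs - xns lies in the weakly unobservable subspace. -/
theorem opaque_iff_diff_mem_wus {n p m : ℕ}
    (A : Matrix (Fin n) (Fin n) ℝ) (B : Matrix (Fin n) (Fin p) ℝ)
    (C : Matrix (Fin m) (Fin n) ℝ) (D : Matrix (Fin m) (Fin p) ℝ) (xs xns : Fin n → ℝ) :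
    isOpaque A B C D xs xns ↔ xs - xns ∈ wus A B C D := by
  constructor
  · intro h
    obtain ⟨uns, huns⟩ := h 0
    refine ⟨(0 : ℕ → Fin p → ℝ) - uns, fun k => ?_⟩
    rw [outSeq_sub, ← huns k]
    simp
  · rintro ⟨u0, hu0⟩ us
    refine ⟨us - u0, fun k => ?_⟩
    have : xns = xs - (xs - xns) := by abel
    rw [this, outSeq_sub, hu0 k]
    simp
end
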